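/- Let P and Q be two probability distributions on the same measurable space with 0 < H(P,Q) < 1, and let X be a real-valued random variable with finite variance under both P and Q. Then ((E_P[X] − E_Q[X])² / (4 − 2·H(P,Q)²)) · (1/H(P,Q) − H(P,Q))² ≤ Var_P(X) + Var_Q(X). -/

import Mathlib

/-!
Let `u, v` be the square roots of the densities of `P, Q` with respect to `P + Q`, so that
`∫ (u - v)² = 2H²` and, by the parallelogram law, `∫ (u + v)² = 4 - 2H²`. Centre `X` at the midpoint
`c` of its two means and put `g = X - c`. The mean difference `∫ g (u² - v²)` factors both as
`∫ (g u + g v)(u - v)` and as `∫ (g u - g v)(u + v)`. The two Cauchy–Schwarz bounds, weighted by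
`4 - 2H²` and `2H²` and added, bound the squared mean difference by
`H² (4 - 2H²) (Var_P X + Var_Q X + (E_P X - E_Q X)² / 2)`, and this rearranges to the claim.
-/

open MeasureTheory ProbabilityTheory

/-- The squared Hellinger distance `H(P,Q)²` between two measures on the same
measurable space, defined via the densities with respect to the dominating measure `P + Q`. -/
noncomputable def sqHellinger {Ω : Type*} [MeasurableSpace Ω] (P Q : Measure Ω) : ℝ :=
  (1 / 2) * ∫ ω, (Real.sqrt ((P.rnDeriv (P + Q) ω).toReal)
    - Real.sqrt ((Q.rnDeriv (P + Q) ω).toReal)) ^ 2 ∂(P + Q)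

/-- The Hellinger distance `H(P,Q)` is the square root of `sqHellinger P Q`. -/
noncomputable def hellinger {Ω : Type*} [MeasurableSpace Ω] (P Q : Measure Ω) : ℝ :=
  Real.sqrt (sqHellinger P Q)

section

variable {Ω : Type*} [MeasurableSpace Ω]

section SquareIntegrable

variable {ν : Measure Ω} {f g u v : Ω → ℝ}

lemma sq_integral_mul_le_integral_sq_mul_integral_sq (hf : MemLp f 2 ν) (hg : MemLp g 2 ν) :
    (∫ ω, f ω * g ω ∂ν) ^ 2 ≤ (∫ ω, f ω ^ 2 ∂ν) * ∫ ω, g ω ^ 2 ∂ν := by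
  have hquadratic : ∀ t : ℝ, 0 ≤ (∫ ω, g ω ^ 2 ∂ν) * (t * t)
      + (-2 * ∫ ω, f ω * g ω ∂ν) * t + ∫ ω, f ω ^ 2 ∂ν := by
    intro t
    have hf2 : Integrable (fun ω => f ω ^ 2) ν := hf.integrable_sq
    have hg2 : Integrable (fun ω => g ω ^ 2) ν := hg.integrable_sq
    have hfg : Integrable (fun ω => f ω * g ω) ν := hf.integrable_mul hg
    have hexpand : ∫ ω, (f ω - t * g ω) ^ 2 ∂ν = ∫ ω, f ω ^ 2 ∂ν
        - 2 * t * ∫ ω, f ω * g ω ∂ν + t ^ 2 * ∫ ω, g ω ^ 2 ∂ν := by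
      have hfirst : Integrable (fun ω => f ω ^ 2 - 2 * t * (f ω * g ω)) ν :=
        hf2.sub (hfg.const_mul _)
      rw [← integral_const_mul, ← integral_const_mul, ← integral_sub hf2 (hfg.const_mul _),
        ← integral_add hfirst (hg2.const_mul _)]
      congr 1 with ω
      ring
    have hnonneg : 0 ≤ ∫ ω, (f ω - t * g ω) ^ 2 ∂ν := integral_nonneg fun ω => sq_nonneg _
    linarith
  have := discrim_le_zero hquadratic
  rw [discrim] at this
  linarith

lemma integral_add_sq_add_integral_sub_sq (hf : MemLp f 2 ν) (hg : MemLp g 2 ν) :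
    ∫ ω, (f ω + g ω) ^ 2 ∂ν + ∫ ω, (f ω - g ω) ^ 2 ∂ν
      = 2 * (∫ ω, f ω ^ 2 ∂ν + ∫ ω, g ω ^ 2 ∂ν) := by
  have hadd : Integrable (fun ω => (f ω + g ω) ^ 2) ν := (hf.add hg).integrable_sq
  have hsub : Integrable (fun ω => (f ω - g ω) ^ 2) ν := (hf.sub hg).integrable_sq
  rw [← integral_add hadd hsub, ← integral_add hf.integrable_sq hg.integrable_sq,
    ← integral_const_mul]
  congr 1 with ω
  ring

lemma sq_integral_mul_sq_sub_mul_le (hu : MemLp u 2 ν) (hv : MemLp v 2 ν)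
    (hgu : MemLp (g * u) 2 ν) (hgv : MemLp (g * v) 2 ν) :
    (∫ ω, g ω * u ω ^ 2 ∂ν - ∫ ω, g ω * v ω ^ 2 ∂ν) ^ 2 * (∫ ω, u ω ^ 2 ∂ν + ∫ ω, v ω ^ 2 ∂ν)
      ≤ (∫ ω, g ω ^ 2 * u ω ^ 2 ∂ν + ∫ ω, g ω ^ 2 * v ω ^ 2 ∂ν)
        * (∫ ω, (u ω - v ω) ^ 2 ∂ν) * ∫ ω, (u ω + v ω) ^ 2 ∂ν := by
  set d := ∫ ω, g ω * u ω ^ 2 ∂ν - ∫ ω, g ω * v ω ^ 2 ∂ν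
  have hd : d = ∫ ω, g ω * u ω ^ 2 - g ω * v ω ^ 2 ∂ν := by
    have hguu : Integrable (fun ω => g ω * u ω ^ 2) ν := by
      refine (hgu.integrable_mul hu).congr (.of_forall fun ω => ?_)
      simp only [Pi.mul_apply]
      ring
    have hgvv : Integrable (fun ω => g ω * v ω ^ 2) ν := by
      refine (hgv.integrable_mul hv).congr (.of_forall fun ω => ?_)
      simp only [Pi.mul_apply]
      ring
    exact (integral_sub hguu hgvv).symm
  have hCS₁ := sq_integral_mul_le_integral_sq_mul_integral_sq (hgu.add hgv) (hu.sub hv)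
  have hCS₂ := sq_integral_mul_le_integral_sq_mul_integral_sq (hgu.sub hgv) (hu.add hv)
  have hd₁ : ∫ ω, (g * u + g * v) ω * (u - v) ω ∂ν = d := by
    rw [hd]; congr 1 with ω; simp only [Pi.add_apply, Pi.sub_apply, Pi.mul_apply]; ring
  have hd₂ : ∫ ω, (g * u - g * v) ω * (u + v) ω ∂ν = d := by
    rw [hd]; congr 1 with ω; simp only [Pi.add_apply, Pi.sub_apply, Pi.mul_apply]; ring
  rw [hd₁] at hCS₁
  rw [hd₂] at hCS₂
  have hgg := integral_add_sq_add_integral_sub_sq hgu hgv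
  have huv := integral_add_sq_add_integral_sub_sq hu hv
  simp only [Pi.add_apply, Pi.sub_apply, Pi.mul_apply, mul_pow] at hCS₁ hCS₂ hgg
  have hS : 0 ≤ ∫ ω, (u ω - v ω) ^ 2 ∂ν := integral_nonneg fun ω => sq_nonneg _
  have hT : 0 ≤ ∫ ω, (u ω + v ω) ^ 2 ∂ν := integral_nonneg fun ω => sq_nonneg _
  linear_combination (mul_le_mul_of_nonneg_right hCS₁ hT + mul_le_mul_of_nonneg_right hCS₂ hS
    + (∫ ω, (u ω - v ω) ^ 2 ∂ν) * (∫ ω, (u ω + v ω) ^ 2 ∂ν) * hgg - d ^ 2 * huv) / 2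

end SquareIntegrable

section SqrtDensity

variable {μ ν : Measure Ω} {g : Ω → ℝ}

lemma integral_mul_sqrt_rnDeriv_sq [SigmaFinite μ] [μ.HaveLebesgueDecomposition ν]
    (hμν : μ ≪ ν) (f : Ω → ℝ) :
    ∫ ω, f ω * √(μ.rnDeriv ν ω).toReal ^ 2 ∂ν = ∫ ω, f ω ∂μ := by
  simp_rw [Real.sq_sqrt ENNReal.toReal_nonneg, mul_comm (f _)]
  exact integral_toReal_rnDeriv_mul hμν

lemma memLp_sqrt_rnDeriv [IsFiniteMeasure μ] :
    MemLp (fun ω => √(μ.rnDeriv ν ω).toReal) 2 ν := by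
  refine (memLp_two_iff_integrable_sq
    (μ.measurable_rnDeriv ν).ennreal_toReal.sqrt.aestronglyMeasurable).2 ?_
  simp_rw [Real.sq_sqrt ENNReal.toReal_nonneg]
  exact Measure.integrable_toReal_rnDeriv

lemma memLp_mul_sqrt_rnDeriv [SigmaFinite μ] [μ.HaveLebesgueDecomposition ν] (hμν : μ ≪ ν)
    (hg : MemLp g 2 μ) (hgν : AEStronglyMeasurable g ν) :
    MemLp (g * fun ω => √(μ.rnDeriv ν ω).toReal) 2 ν := by
  refine (memLp_two_iff_integrable_sq (hgν.mul
    (μ.measurable_rnDeriv ν).ennreal_toReal.sqrt.aestronglyMeasurable)).2 ?_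
  simp_rw [Pi.mul_apply, mul_pow, Real.sq_sqrt ENNReal.toReal_nonneg, mul_comm (g _ ^ 2)]
  exact (integrable_toReal_rnDeriv_mul_iff hμν).2 hg.integrable_sq

end SqrtDensity

lemma integral_sub_const_sq_eq_variance_add (μ : Measure Ω) [IsProbabilityMeasure μ] {X : Ω → ℝ}
    (hX : MemLp X 2 μ) (c : ℝ) :
    ∫ ω, (X ω - c) ^ 2 ∂μ = variance X μ + (∫ ω, X ω ∂μ - c) ^ 2 := by
  have h := variance_eq_sub (X := fun ω => X ω - c) (hX.sub (memLp_const c))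
  rw [variance_sub_const hX.aestronglyMeasurable] at h
  rw [h, integral_sub (hX.integrable one_le_two) (integrable_const c)]
  simp

lemma sqHellinger_nonneg (P Q : Measure Ω) : 0 ≤ sqHellinger P Q :=
  mul_nonneg (by norm_num) (integral_nonneg fun _ => sq_nonneg _)

section Hellinger

variable (P Q : Measure Ω) [IsProbabilityMeasure P] [IsProbabilityMeasure Q] {g X : Ω → ℝ}

lemma sq_integral_sub_integral_le_sqHellinger (hgP : MemLp g 2 P) (hgQ : MemLp g 2 Q) :
    (∫ ω, g ω ∂P - ∫ ω, g ω ∂Q) ^ 2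
      ≤ (∫ ω, g ω ^ 2 ∂P + ∫ ω, g ω ^ 2 ∂Q) * sqHellinger P Q * (4 - 2 * sqHellinger P Q) := by
  have hP : P ≪ P + Q := (Measure.le_add_right le_rfl).absolutelyContinuous
  have hQ : Q ≪ P + Q := (Measure.le_add_left le_rfl).absolutelyContinuous
  have hg : AEStronglyMeasurable g (P + Q) :=
    aestronglyMeasurable_add_measure_iff.2 ⟨hgP.aestronglyMeasurable, hgQ.aestronglyMeasurable⟩
  have hu : MemLp (fun ω => √(P.rnDeriv (P + Q) ω).toReal) 2 (P + Q) := memLp_sqrt_rnDeriv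
  have hv : MemLp (fun ω => √(Q.rnDeriv (P + Q) ω).toReal) 2 (P + Q) := memLp_sqrt_rnDeriv
  have hmass : ∀ R : Measure Ω, [IsProbabilityMeasure R] → R ≪ P + Q →
      ∫ ω, √(R.rnDeriv (P + Q) ω).toReal ^ 2 ∂(P + Q) = 1 := fun R _ hR => by
    simpa using integral_mul_sqrt_rnDeriv_sq hR (fun _ => 1)
  have hsum := integral_add_sq_add_integral_sub_sq hu hv
  have key := sq_integral_mul_sq_sub_mul_le hu hv (memLp_mul_sqrt_rnDeriv hP hgP hg)
    (memLp_mul_sqrt_rnDeriv hQ hgQ hg)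
  rw [hmass P hP, hmass Q hQ] at key hsum
  simp only [integral_mul_sqrt_rnDeriv_sq hP, integral_mul_sqrt_rnDeriv_sq hQ] at key
  have hS : ∫ ω, (√(P.rnDeriv (P + Q) ω).toReal - √(Q.rnDeriv (P + Q) ω).toReal) ^ 2 ∂(P + Q)
      = 2 * sqHellinger P Q := by
    rw [sqHellinger]; ring
  have hT : ∫ ω, (√(P.rnDeriv (P + Q) ω).toReal + √(Q.rnDeriv (P + Q) ω).toReal) ^ 2 ∂(P + Q)
      = 4 - 2 * sqHellinger P Q := by
    linarith
  rw [hS, hT] at key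
  linarith

lemma sq_integral_sub_integral_mul_le_variance (hXP : MemLp X 2 P) (hXQ : MemLp X 2 Q) :
    (∫ ω, X ω ∂P - ∫ ω, X ω ∂Q) ^ 2 * (1 - sqHellinger P Q) ^ 2
      ≤ (variance X P + variance X Q) * sqHellinger P Q * (4 - 2 * sqHellinger P Q) := by
  set c := (∫ ω, X ω ∂P + ∫ ω, X ω ∂Q) / 2
  have hmean : ∀ μ : Measure Ω, [IsProbabilityMeasure μ] → MemLp X 2 μ →
      ∫ ω, (X ω - c) ∂μ = ∫ ω, X ω ∂μ - c := fun μ _ hXμ => by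
    simp [integral_sub (hXμ.integrable one_le_two) (integrable_const c)]
  have key := sq_integral_sub_integral_le_sqHellinger P Q (hXP.sub (memLp_const c))
    (hXQ.sub (memLp_const c))
  simp only [Pi.sub_apply, hmean P hXP, hmean Q hXQ, integral_sub_const_sq_eq_variance_add P hXP,
    integral_sub_const_sq_eq_variance_add Q hXQ] at key
  linear_combination key

end Hellinger

end

theorem stmt9 {Ω : Type*} [MeasurableSpace Ω] (P Q : Measure Ω)
    [IsProbabilityMeasure P] [IsProbabilityMeasure Q]
    (hH0 : 0 < hellinger P Q) (hH1 : hellinger P Q < 1)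
    (X : Ω → ℝ) (hXP : MemLp X 2 P) (hXQ : MemLp X 2 Q) :
    (((∫ ω, X ω ∂P) - ∫ ω, X ω ∂Q) ^ 2 / (4 - 2 * hellinger P Q ^ 2))
        * (1 / hellinger P Q - hellinger P Q) ^ 2
      ≤ variance X P + variance X Q := by
  have key := sq_integral_sub_integral_mul_le_variance P Q hXP hXQ
  rw [← Real.sq_sqrt (sqHellinger_nonneg P Q), ← hellinger] at key
  set H := hellinger P Q
  have hH2 : H ^ 2 < 1 := by nlinarith
  rw [show 1 / H - H = (1 - H ^ 2) / H by field_simp, div_pow, div_mul_div_comm,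
    div_le_iff₀ (mul_pos (by linarith) (by positivity))]
  linear_combination key
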